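/- Let G be a graph, t < |V(G)|, and H the graph on V(G) ∪ E(G) with all node vertices pairwise adjacent and each edge vertex adjacent to its two endpoints; D = V(G). Then G contains a t-clique if and only if there exists an attack A with |A| = t and payoffatt(H,D,A) ≥ t + C(t,2). -/

import Mathlib

open SimpleGraph

/-- A vertex `v` survives under defense `D` and attack `A` if `v ∉ A` and
the graph `G - A` contains a path from `v` to some vertex of `D`. -/
def survives {V : Type*} (G : SimpleGraph V) (D A : Finset V) (v : V) : Prop :=
  ∃ (hv : v ∉ A) (d : V) (_ : d ∈ D) (hd : d ∉ A),
    (G.induce {x : V | x ∉ A}).Reachable ⟨v, hv⟩ ⟨d, hd⟩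

/-- The number of surviving vertices. -/
noncomputable def payoff {V : Type*} (G : SimpleGraph V) (D A : Finset V) : ℕ :=
  Set.ncard {v : V | survives G D A v}

/-- The number of disabled (non-surviving) vertices. -/
noncomputable def payoffatt {V : Type*} (G : SimpleGraph V) (D A : Finset V) : ℕ :=
  Set.ncard {v : V | ¬ survives G D A v}
/-- The gadget graph on `V(G) ∪ E(G)`: node vertices form a clique, and each edge
vertex is adjacent exactly to its two endpoints. -/
def gadget {V : Type*} (G : SimpleGraph V) : SimpleGraph (V ⊕ G.edgeSet) where
  Adj x y :=
    match x, y with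
    | .inl u, .inl v => u ≠ v
    | .inl u, .inr e => u ∈ (e : Sym2 V)
    | .inr e, .inl u => u ∈ (e : Sym2 V)
    | .inr _, .inr _ => False
  symm := ⟨by
    rintro (u | e) (v | f) h <;> simp_all <;>
    exact fun hvu => h hvu.symm⟩
  loopless := ⟨by rintro (u | e) h <;> simp_all⟩

section Aux

open Finset

variable {V : Type*}

/-- The number of non-diagonal elements of `S.sym2` is `C(|S|, 2)`. -/
lemma card_sym2_not_diag [DecidableEq V] (S : Finset V) :
    (S.sym2.filter fun z => ¬ z.IsDiag).card = S.card.choose 2 := by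
  classical
  have himg : (S.sym2.filter fun z => ¬ z.IsDiag) =
      ((Finset.univ : Finset (Sym2 {x // x ∈ S})).filter fun z => ¬ z.IsDiag).image
        (Sym2.map Subtype.val) := by
    ext z
    simp only [Finset.mem_filter, Finset.mem_image, Finset.mem_univ, true_and,
      Finset.mem_sym2_iff]
    constructor
    · rintro ⟨hz, hd⟩
      revert hz hd
      induction z using Sym2.ind with
      | _ a b =>
        intro hz hd
        refine ⟨s(⟨a, hz a (by simp)⟩, ⟨b, hz b (by simp)⟩), ?_, rfl⟩
        simpa [Sym2.isDiag_iff_proj_eq, Subtype.ext_iff] using hd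
    · rintro ⟨w, hw, rfl⟩
      refine ⟨fun a ha => ?_, ?_⟩
      · obtain ⟨b, _, rfl⟩ := Sym2.mem_map.mp ha
        exact b.2
      · rwa [Sym2.isDiag_map Subtype.val_injective]
  rw [himg, Finset.card_image_of_injective _ (Sym2.map.injective Subtype.val_injective),
    ← Fintype.card_subtype, Sym2.card_subtype_not_diag, Fintype.card_coe]

variable (G : SimpleGraph V)

/-- Defended set: all node vertices. -/
private abbrev Dset [Fintype V] [DecidableEq (V ⊕ G.edgeSet)] : Finset (V ⊕ G.edgeSet) :=
  (Finset.univ : Finset V).image (Sum.inl : V → V ⊕ G.edgeSet)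

variable [Fintype V] [DecidableEq (V ⊕ G.edgeSet)]

lemma survives_inl {A : Finset (V ⊕ G.edgeSet)} {v : V}
    (hv : Sum.inl v ∉ A) : survives (gadget G) (Dset G) A (Sum.inl v) :=
  ⟨hv, Sum.inl v, Finset.mem_image_of_mem _ (Finset.mem_univ v), hv, Reachable.refl _⟩

lemma survives_inr {A : Finset (V ⊕ G.edgeSet)} {e : G.edgeSet}
    (he : Sum.inr e ∉ A) {u : V} (hu : u ∈ (e : Sym2 V)) (hua : Sum.inl u ∉ A) :
    survives (gadget G) (Dset G) A (Sum.inr e) := by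
  refine ⟨he, Sum.inl u, Finset.mem_image_of_mem _ (Finset.mem_univ u), hua, ?_⟩
  exact Adj.reachable (by exact hu :
    ((gadget G).induce {x | x ∉ A}).Adj ⟨Sum.inr e, he⟩ ⟨Sum.inl u, hua⟩)

lemma not_survives_inr {A : Finset (V ⊕ G.edgeSet)} {e : G.edgeSet}
    (h : ∀ u ∈ (e : Sym2 V), Sum.inl u ∈ A) :
    ¬ survives (gadget G) (Dset G) A (Sum.inr e) := by
  rintro ⟨he, d, hdD, hd, hr⟩
  obtain ⟨u, -, rfl⟩ := Finset.mem_image.mp hdD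
  obtain ⟨w⟩ := hr
  cases w with
  | cons hadj p =>
    rename_i b
    obtain ⟨(x | f), hb⟩ := b
    · exact hb (h x hadj)
    · exact hadj

lemma not_survives_set (A : Finset (V ⊕ G.edgeSet)) [Fintype G.edgeSet]
    [DecidablePred fun e : G.edgeSet => ∀ u ∈ (e : Sym2 V), Sum.inl u ∈ A] :
    {x : V ⊕ G.edgeSet | ¬ survives (gadget G) (Dset G) A x} =
      ↑(A ∪ ((Finset.univ : Finset G.edgeSet).filter
        (fun e : G.edgeSet => ∀ u ∈ (e : Sym2 V), Sum.inl u ∈ A)).image Sum.inr) := by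
  classical
  ext x
  simp only [Set.mem_setOf_eq, Finset.coe_union, Set.mem_union, Finset.mem_coe,
    Finset.coe_image, Set.mem_image, Finset.mem_coe, Finset.mem_filter, Finset.mem_univ,
    true_and]
  cases x with
  | inl v =>
    constructor
    · intro hns
      by_contra hc
      push_neg at hc
      exact hns (survives_inl G hc.1)
    · rintro (hA | ⟨e, -, he⟩)
      · exact fun hs => hs.1 hA
      · simp at he
  | inr e =>
    constructor
    · intro hns
      by_contra hc
      push_neg at hc
      obtain ⟨hA, hall⟩ := hc
      have hne : ¬ ∀ u ∈ (e : Sym2 V), Sum.inl u ∈ A := fun h => (hall e h) rfl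
      push_neg at hne
      obtain ⟨u, hu, hua⟩ := hne
      exact hns (survives_inr G hA hu hua)
    · rintro (hA | ⟨f, hf, hfe⟩)
      · exact fun hs => hs.1 hA
      · obtain rfl : f = e := Sum.inr_injective hfe
        exact not_survives_inr G hf

end Aux

open scoped Classical in
/-- Correctness of the NP-hardness reduction for CP(Fixed Defense, Pure Attack):
`G` has a `t`-clique iff some `t`-attack on the gadget graph (all node vertices
defended) disables at least `t + C(t,2)` vertices. -/
theorem stmt10 {V : Type*} [Fintype V] (G : SimpleGraph V) (t : ℕ) (hpos : 0 < t)
    (ht : t < Fintype.card V) :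
    (∃ S : Finset V, G.IsNClique t S) ↔
    (∃ A : Finset (V ⊕ G.edgeSet), A.card = t ∧
      t + t.choose 2 ≤ payoffatt (gadget G)
        ((Finset.univ : Finset V).image (Sum.inl : V → V ⊕ G.edgeSet)) A) := by
  classical
  constructor
  · rintro ⟨S, hS⟩
    refine ⟨S.image Sum.inl, by
      rw [Finset.card_image_of_injective _ Sum.inl_injective, hS.2], ?_⟩
    set A : Finset (V ⊕ G.edgeSet) := S.image Sum.inl with hA
    set E' : Finset G.edgeSet := (Finset.univ.filter
      (fun e : G.edgeSet => ∀ u ∈ (e : Sym2 V), Sum.inl u ∈ A)) with hE'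
    have hset := not_survives_set G (A := A)
    rw [payoffatt, hset, Set.ncard_coe_finset]
    have hdisj : Disjoint A (E'.image Sum.inr) := by
      rw [Finset.disjoint_left]
      rintro x hxA hxE
      obtain ⟨v, -, rfl⟩ := Finset.mem_image.mp hxA
      obtain ⟨e, -, he⟩ := Finset.mem_image.mp hxE
      simp at he
    rw [Finset.card_union_of_disjoint hdisj,
      Finset.card_image_of_injective _ Sum.inr_injective,
      Finset.card_image_of_injective _ Sum.inl_injective, hS.2]
    -- count edges inside the clique
    have hval : E'.image (Subtype.val) = S.sym2.filter fun z => ¬ z.IsDiag := by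
      ext z
      simp only [Finset.mem_image, Finset.mem_filter, Finset.mem_univ, true_and,
        Finset.mem_sym2_iff]
      constructor
      · rintro ⟨e, he, rfl⟩
        simp only [hE', Finset.mem_filter, Finset.mem_univ, true_and] at he
        refine ⟨fun a ha => ?_, G.not_isDiag_of_mem_edgeSet e.2⟩
        have := he a ha
        simpa [hA] using this
      · rintro ⟨hz, hd⟩
        revert hz hd
        induction z using Sym2.ind with
        | _ a b =>
          intro hz hd
          have hab : a ≠ b := by simpa [Sym2.isDiag_iff_proj_eq] using hd
          have hadj : G.Adj a b := hS.1 (hz a (by simp)) (hz b (by simp)) hab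
          refine ⟨⟨s(a, b), hadj⟩,
            Finset.mem_filter.mpr ⟨Finset.mem_univ _, fun u hu => ?_⟩, rfl⟩
          simp only [hA, Finset.mem_image]
          rcases Sym2.mem_iff.mp hu with rfl | rfl
          · exact ⟨u, hz u (by simp), rfl⟩
          · exact ⟨u, hz u (by simp), rfl⟩
    have hcard : E'.card = t.choose 2 := by
      rw [← Finset.card_image_of_injective E' Subtype.val_injective, hval,
        card_sym2_not_diag, hS.2]
    omega
  · rintro ⟨A, hAcard, hpay⟩
    set E' : Finset G.edgeSet := (Finset.univ.filter
      (fun e : G.edgeSet => ∀ u ∈ (e : Sym2 V), Sum.inl u ∈ A)) with hE'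
    have hset := not_survives_set G (A := A)
    rw [payoffatt, hset, Set.ncard_coe_finset, ← hE'] at hpay
    set S : Finset V := Finset.univ.filter (fun v => Sum.inl v ∈ A) with hSdef
    have hk : S.card ≤ t := by
      rw [← hAcard, ← Finset.card_image_of_injective (f := (Sum.inl : V → V ⊕ G.edgeSet)) S
        Sum.inl_injective]
      apply Finset.card_le_card
      intro x hx
      obtain ⟨v, hv, rfl⟩ := Finset.mem_image.mp hx
      simpa [hSdef] using hv
    have hEsub : E'.image (Subtype.val) ⊆ S.sym2.filter fun z => ¬ z.IsDiag := by
      intro z hz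
      obtain ⟨e, he, rfl⟩ := Finset.mem_image.mp hz
      simp only [hE', Finset.mem_filter, Finset.mem_univ, true_and] at he
      refine Finset.mem_filter.mpr ⟨Finset.mem_sym2_iff.mpr fun a ha => ?_,
        G.not_isDiag_of_mem_edgeSet e.2⟩
      simp only [hSdef, Finset.mem_filter, Finset.mem_univ, true_and]
      exact he a ha
    have hEle : E'.card ≤ S.card.choose 2 := by
      rw [← Finset.card_image_of_injective E' Subtype.val_injective,
        ← card_sym2_not_diag S]
      exact Finset.card_le_card hEsub
    have hFle : (A ∪ E'.image Sum.inr).card ≤ t + E'.card := by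
      calc (A ∪ E'.image Sum.inr).card ≤ A.card + (E'.image Sum.inr).card :=
            Finset.card_union_le _ _
        _ ≤ t + E'.card := by
            rw [hAcard, Finset.card_image_of_injective _ Sum.inr_injective]
    have hE'ge : t.choose 2 ≤ E'.card := by omega
    have hchoose : t.choose 2 ≤ S.card.choose 2 := le_trans hE'ge hEle
    rcases eq_or_lt_of_le (Nat.succ_le_of_lt hpos) with h1 | h2
    · -- t = 1 : any singleton is a 1-clique
      obtain ⟨v⟩ : Nonempty V := Fintype.card_pos_iff.mp (lt_trans hpos ht)
      exact ⟨{v}, isNClique_singleton.mpr h1.symm⟩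
    · -- t ≥ 2 : S has exactly t vertices and is a clique
      have hkt : S.card = t := by
        by_contra hne
        have hlt : S.card < t := lt_of_le_of_ne hk hne
        have : S.card.choose 2 < t.choose 2 := by
          calc S.card.choose 2 ≤ (t - 1).choose 2 := Nat.choose_le_choose 2 (by omega)
            _ < t.choose 2 := by
                have h' : t.choose 2 = (t-1).choose 1 + (t-1).choose 2 := by
                  rw [← Nat.succ_sub_one t, Nat.succ_sub_one, ← Nat.succ_pred_eq_of_pos hpos]
                  exact Nat.choose_succ_succ _ _
                have : (t-1).choose 1 = t - 1 := Nat.choose_one_right _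
                omega
        omega
      have hEeq : E'.image (Subtype.val) = S.sym2.filter fun z => ¬ z.IsDiag := by
        apply Finset.eq_of_subset_of_card_le hEsub
        rw [card_sym2_not_diag, Finset.card_image_of_injective E' Subtype.val_injective, hkt]
        exact hE'ge
      refine ⟨S, ⟨?_, hkt⟩⟩
      intro a ha b hb hab
      have hz : s(a, b) ∈ S.sym2.filter fun z => ¬ z.IsDiag := by
        refine Finset.mem_filter.mpr ⟨?_, by simpa [Sym2.isDiag_iff_proj_eq] using hab⟩
        rw [Finset.mk_mem_sym2_iff]
        exact ⟨ha, hb⟩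
      rw [← hEeq] at hz
      obtain ⟨e, -, he⟩ := Finset.mem_image.mp hz
      have : s(a, b) ∈ G.edgeSet := he ▸ e.2
      exact this
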